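/- arXiv:1911.03227 — 3 statements merged into one kernel-verified Lean document; each statement's English description precedes it below -/
import Mathlib

section
/- Let Γ = Γ(G, (G_i)_{i∈I}) be a coset incidence geometry over I, fix i ∈ I and let J ⊆ I ∖ {i}. Then G is transitive on the set of flags of type {i} ∪ J if and only if G is transitive on the set of flags of type J and ⋂_{j∈J} G_i G_j = G_i G_J. -/
open scoped Pointwise

namespace ChiralGeom

/-- An incidence system `(X, *, t, I)`: a set of elements `X`, a type function `t : X → I`,
and a reflexive symmetric incidence relation such that distinct elements of the same type
are never incident. -/
structure IncidenceSystem (X : Type*) (I : Type*) where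
  t : X → I
  inc : X → X → Prop
  inc_refl : ∀ x, inc x x
  inc_symm : ∀ x y, inc x y → inc y x
  eq_of_inc_of_t_eq : ∀ x y, inc x y → t x = t y → x = y

namespace IncidenceSystem

variable {X I : Type*} (Γ : IncidenceSystem X I)

/-- A flag is a set of pairwise incident elements. -/
def IsFlag (F : Set X) : Prop := ∀ x ∈ F, ∀ y ∈ F, Γ.inc x y

/-- A chamber is a flag of type `I` (containing elements of every type). -/
def IsChamber (C : Set X) : Prop := Γ.IsFlag C ∧ Γ.t '' C = Set.univ

/-- `Γ` is a geometry when every flag is contained in a chamber. -/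
def IsGeometry : Prop := ∀ F : Set X, Γ.IsFlag F → ∃ C : Set X, Γ.IsChamber C ∧ F ⊆ C

/-- The elements of the residue of a flag `F`: elements not in `F` incident to
every element of `F`. -/
def ResidueElt (F : Set X) : Type _ := {x : X // x ∉ F ∧ ∀ y ∈ F, Γ.inc x y}

/-- The residue of a flag `F`, an incidence system over `I ∖ t(F)`. -/
def residue (F : Set X) : IncidenceSystem (Γ.ResidueElt F) {i : I // i ∉ Γ.t '' F} where
  t x := ⟨Γ.t x.1, by
    rintro ⟨y, hy, hty⟩
    exact x.2.1 (by
      rw [Γ.eq_of_inc_of_t_eq x.1 y (x.2.2 y hy) hty.symm]; exact hy)⟩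
  inc x y := Γ.inc x.1 y.1
  inc_refl x := Γ.inc_refl x.1
  inc_symm x y h := Γ.inc_symm _ _ h
  eq_of_inc_of_t_eq x y h ht :=
    Subtype.ext (Γ.eq_of_inc_of_t_eq _ _ h (congrArg Subtype.val ht))

/-- `Γ` is connected when its incidence graph is connected. -/
def Connected : Prop := ∀ x y : X, Relation.ReflTransGen Γ.inc x y

/-- `Γ` is residually connected when every residue of rank at least two
(including `Γ` itself, the residue of the empty flag) is connected. -/
def ResiduallyConnected : Prop :=
  ∀ F : Set X, Γ.IsFlag F → ({i : I | i ∉ Γ.t '' F}).Nontrivial → (Γ.residue F).Connected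

/-- `Γ` is firm when every residue of rank one has at least two elements. -/
def IsFirm : Prop :=
  ∀ F : Set X, Γ.IsFlag F → (∃ i : I, {i' : I | i' ∉ Γ.t '' F} = {i}) →
    ∃ x y : Γ.ResidueElt F, x ≠ y

/-- `Γ` is thin when every residue of rank one has exactly two elements. -/
def IsThin : Prop :=
  ∀ F : Set X, Γ.IsFlag F → (∃ i : I, {i' : I | i' ∉ Γ.t '' F} = {i}) →
    ∃ x y : Γ.ResidueElt F, x ≠ y ∧ ∀ z : Γ.ResidueElt F, z = x ∨ z = y

/-- A type-preserving automorphism: a permutation of the elements preserving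
incidence and types. -/
def IsAut (e : Equiv.Perm X) : Prop :=
  (∀ x y, Γ.inc x y ↔ Γ.inc (e x) (e y)) ∧ ∀ x, Γ.t (e x) = Γ.t x

/-- Two sets of elements (e.g. chambers) in the same orbit of `Aut_I(Γ)`. -/
def SameOrbit (C C' : Set X) : Prop := ∃ e : Equiv.Perm X, Γ.IsAut e ∧ e '' C = C'

/-- Two chambers are adjacent when they differ in exactly one element. -/
def Adjacent (C C' : Set X) : Prop :=
  Γ.IsChamber C ∧ Γ.IsChamber C' ∧
    ∃ x ∈ C, ∃ y ∈ C', x ≠ y ∧ C \ {x} = C' \ {y}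

/-- `Γ` is chiral when `Aut_I(Γ)` has exactly two orbits on chambers,
and adjacent chambers always lie in distinct orbits. -/
def IsChiral : Prop :=
  (∃ C₁ C₂ : Set X, Γ.IsChamber C₁ ∧ Γ.IsChamber C₂ ∧ ¬ Γ.SameOrbit C₁ C₂ ∧
      ∀ C : Set X, Γ.IsChamber C → Γ.SameOrbit C₁ C ∨ Γ.SameOrbit C₂ C) ∧
  ∀ C C' : Set X, Γ.Adjacent C C' → ¬ Γ.SameOrbit C C'

end IncidenceSystem

section Coset

variable {G : Type*} [Group G] {ι : Type*}

/-- The elements of the coset incidence system: pairs `(i, S)` where `S` is a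
(left) coset `g Gᵢ`. -/
abbrev CosetElt (Gs : ι → Subgroup G) : Type _ :=
  {p : ι × Set G // ∃ g : G, p.2 = ({g} : Set G) * (Gs p.1 : Set G)}

lemma mem_singleton_mul_self {H : Subgroup G} (a : G) : a ∈ ({a} : Set G) * (H : Set G) :=
  ⟨a, rfl, 1, H.one_mem, mul_one a⟩

lemma singleton_mul_subgroup_eq {H : Subgroup G} {a b : G}
    (h : ((({a} : Set G) * (H : Set G)) ∩ (({b} : Set G) * (H : Set G))).Nonempty) :
    ({a} : Set G) * (H : Set G) = ({b} : Set G) * (H : Set G) := by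
  obtain ⟨x, hx1, hx2⟩ := h
  obtain ⟨a', ha', h1, hh1, hxa⟩ := Set.mem_mul.mp hx1
  obtain ⟨b', hb', h2, hh2, hxb⟩ := Set.mem_mul.mp hx2
  clear hx1 hx2
  obtain rfl : a = a' := ha'.symm
  obtain rfl : b = b' := hb'.symm
  have key : a * h1 = b * h2 := hxa.trans hxb.symm
  have e1 : b⁻¹ * (a * h1) = h2 := by rw [key, inv_mul_cancel_left]
  have e : b⁻¹ * a = h2 * h1⁻¹ := by rw [← e1]; group
  have hba : b⁻¹ * a ∈ H := e ▸ H.mul_mem hh2 (H.inv_mem hh1)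
  ext y
  simp only [Set.mem_mul, Set.mem_singleton_iff, exists_eq_left]
  constructor
  · rintro ⟨z, hz, rfl⟩
    exact ⟨(b⁻¹ * a) * z, H.mul_mem hba hz, by group⟩
  · rintro ⟨z, hz, rfl⟩
    exact ⟨(a⁻¹ * b) * z, H.mul_mem (by simpa using H.inv_mem hba) hz, by group⟩

/-- The coset incidence system `Γ(G; (Gᵢ)_{i∈ι})` : elements are the cosets `g Gᵢ`,
the type of `g Gᵢ` is `i`, and two cosets are incident iff they meet. -/
def cosetSystem (Gs : ι → Subgroup G) : IncidenceSystem (CosetElt Gs) ι where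
  t p := p.1.1
  inc p q := (p.1.2 ∩ q.1.2).Nonempty
  inc_refl p := by
    obtain ⟨g, hg⟩ := p.2
    exact ⟨g, by rw [Set.inter_self, hg]; exact mem_singleton_mul_self g⟩
  inc_symm p q h := by
    obtain ⟨x, hx1, hx2⟩ := h
    exact ⟨x, hx2, hx1⟩
  eq_of_inc_of_t_eq p q h ht := by
    obtain ⟨a, ha⟩ := p.2
    obtain ⟨b, hb⟩ := q.2
    have ht' : p.1.1 = q.1.1 := ht
    apply Subtype.ext
    apply Prod.ext ht'
    show p.1.2 = q.1.2
    have hb2 : q.1.2 = ({b} : Set G) * (Gs p.1.1 : Set G) := by rw [hb, ht']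
    rw [ha, hb2]
    apply singleton_mul_subgroup_eq
    rw [← ha, ← hb2]
    exact h

/-- The coset `g Gᵢ` as an element of the coset incidence system. -/
def mkElt (Gs : ι → Subgroup G) (i : ι) (g : G) : CosetElt Gs :=
  ⟨(i, ({g} : Set G) * (Gs i : Set G)), ⟨g, rfl⟩⟩

/-- The identity coset `Gᵢ` as an element of the coset incidence system. -/
def idElt (Gs : ι → Subgroup G) (i : ι) : CosetElt Gs :=
  ⟨(i, (Gs i : Set G)), ⟨1, by rw [Set.singleton_one, one_mul]⟩⟩

/-- The action of `g ∈ G` on the coset incidence system by multiplication. -/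
def actElt (Gs : ι → Subgroup G) (g : G) (x : CosetElt Gs) : CosetElt Gs :=
  ⟨(x.1.1, ({g} : Set G) * x.1.2), by
    obtain ⟨a, ha⟩ := x.2
    exact ⟨g * a, by rw [ha, ← mul_assoc, Set.singleton_mul_singleton]⟩⟩

/-- `G` is transitive on the set of flags of type `J` of the coset incidence system. -/
def flagTransitiveOn (Gs : ι → Subgroup G) (J : Set ι) : Prop :=
  ∀ F F' : Set (CosetElt Gs), (cosetSystem Gs).IsFlag F → (cosetSystem Gs).IsFlag F' →
    (cosetSystem Gs).t '' F = J → (cosetSystem Gs).t '' F' = J →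
    ∃ g : G, (actElt Gs g) '' F = F'

/-- The parabolic subgroup `G_J := ⋂_{j ∈ J} G_j`. -/
def interSub (Gs : ι → Subgroup G) (J : Set ι) : Subgroup G := ⨅ j ∈ J, Gs j

/-- The flag `{G_j : j ∈ J}` of identity cosets. -/
def baseFlag (Gs : ι → Subgroup G) (J : Set ι) : Set (CosetElt Gs) :=
  {x | ∃ j ∈ J, x = idElt Gs j}

/-- The family of subgroups `(G_{J ∪ {i}})_{i ∈ I ∖ J}` of `G_J`. -/
def resFamily (Gs : ι → Subgroup G) (J : Set ι) :
    {i : ι // i ∉ J} → Subgroup (interSub Gs J) :=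
  fun i => (interSub Gs (insert i.1 J)).subgroupOf (interSub Gs J)

lemma interSub_le {Gs : ι → Subgroup G} {J : Set ι} {j : ι} (hj : j ∈ J) :
    interSub Gs J ≤ Gs j := by
  intro x hx
  simp only [interSub, Subgroup.mem_iInf] at hx
  exact hx j hj

/-- The canonical homomorphism `φ_J` from the coset incidence system
`Γ(G_J, (G_{J∪{i}})_{i ∈ I∖J})` to the residue of the flag `{G_j : j ∈ J}`,
given by `φ_J (a G_{J∪{i}}) = a G_i` for `a ∈ G_J`. -/
noncomputable def phi (Gs : ι → Subgroup G) (J : Set ι)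
    (x : CosetElt (resFamily Gs J)) :
    (cosetSystem Gs).ResidueElt (baseFlag Gs J) :=
  ⟨mkElt Gs x.1.1.1 (x.2.choose : G), by
    constructor
    · rintro ⟨j, hj, hEq⟩
      have : x.1.1.1 = j := congrArg (fun y : CosetElt Gs => y.1.1) hEq
      exact x.1.1.2 (this ▸ hj)
    · rintro y ⟨j, hj, rfl⟩
      refine ⟨(x.2.choose : G), mem_singleton_mul_self _, ?_⟩
      exact interSub_le hj (x.2.choose).2⟩

end Coset

section CPlus

variable {G : Type*} [Group G]

/-- The subgroup `G⁺_J := ⟨α_i⁻¹ α_j : i, j ∈ J⟩`. -/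
def GJc (α : ℕ → G) (J : Set ℕ) : Subgroup G :=
  Subgroup.closure {g | ∃ i ∈ J, ∃ j ∈ J, g = (α i)⁻¹ * α j}

/-- `(G, {α_1, …, α_{r-1}})` is a C⁺-group: `α_0 = 1`, the `α_j` (`1 ≤ j ≤ r-1`)
generate `G`, and the intersection condition IC⁺ holds. -/
def IsCPlusGroup (r : ℕ) (α : ℕ → G) : Prop :=
  α 0 = 1 ∧
  Subgroup.closure {g | ∃ j : ℕ, 1 ≤ j ∧ j < r ∧ g = α j} = ⊤ ∧
  ∀ J K : Set ℕ, J ⊆ Set.Iio r → K ⊆ Set.Iio r → J.Nontrivial → K.Nontrivial →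
    GJc α J ⊓ GJc α K = GJc α (J ∩ K)

/-- The maximal parabolic subgroups: `G₀⁺ = ⟨α_1⁻¹ α_j : j ≥ 2⟩` and
`G_i⁺ = ⟨α_j : j ≠ i⟩` for `i ≥ 1`. -/
def maxParab (r : ℕ) (α : ℕ → G) (i : ℕ) : Subgroup G :=
  if i = 0 then Subgroup.closure {g | ∃ j : ℕ, 2 ≤ j ∧ j < r ∧ g = (α 1)⁻¹ * α j}
  else Subgroup.closure {g | ∃ j : ℕ, 1 ≤ j ∧ j < r ∧ j ≠ i ∧ g = α j}

/-- The family `(G_i⁺)_{i ∈ {0,…,r-1}}` of maximal parabolic subgroups of a C⁺-group. -/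
def cplusFamily (r : ℕ) (α : ℕ → G) : Fin r → Subgroup G := fun i => maxParab r α i.1

end CPlus


/-! Every flag extends to a chamber, so transitivity on the flags of type `{i} ∪ J` restricts to
the flags of type `J`. Up to transitivity on those, a flag of type `{i} ∪ J` contains the base
flag `{G_j : j ∈ J}`, and its element of type `i` is a coset `a Gᵢ` with
`a⁻¹ ∈ ⋂_{j ∈ J} Gᵢ Gⱼ`. Some `c ∈ G_J`, which fixes the base flag, moves `a Gᵢ` to `Gᵢ` exactly
when `a⁻¹ ∈ Gᵢ G_J`. Conversely, for `x ∈ ⋂_{j ∈ J} Gᵢ Gⱼ` the cosets `Gᵢ` and `x Gⱼ` (`j ∈ J`)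
form a flag, and any `g` carrying the base flag of type `{i} ∪ J` onto it has `g ∈ Gᵢ` and
`g⁻¹ x ∈ G_J`. -/

namespace IncidenceSystem

variable {X I : Type*} {Γ : IncidenceSystem X I} {F F₁ F₂ : Set X}

theorem IsFlag.mono (h : F₁ ⊆ F₂) (hF₂ : Γ.IsFlag F₂) : Γ.IsFlag F₁ :=
  fun x hx y hy => hF₂ x (h hx) y (h hy)

theorem IsFlag.insert {x : X} (hF : Γ.IsFlag F) (hx : ∀ y ∈ F, Γ.inc x y) :
    Γ.IsFlag (insert x F) := by
  rintro y (rfl | hy) z (rfl | hz)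
  · exact Γ.inc_refl _
  · exact hx _ hz
  · exact Γ.inc_symm _ _ (hx _ hy)
  · exact hF _ hy _ hz

theorem IsFlag.eq_of_t_eq (hF : Γ.IsFlag F) {x y : X} (hx : x ∈ F) (hy : y ∈ F)
    (h : Γ.t x = Γ.t y) : x = y :=
  Γ.eq_of_inc_of_t_eq x y (hF x hx y hy) h

theorem IsFlag.subset_of_t_image_subset {D : Set X} (hD : Γ.IsFlag D) (h₁ : F₁ ⊆ D)
    (h₂ : F₂ ⊆ D) (ht : Γ.t '' F₂ ⊆ Γ.t '' F₁) : F₂ ⊆ F₁ := by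
  intro x hx
  obtain ⟨y, hy, hxy⟩ := ht ⟨x, hx, rfl⟩
  rwa [hD.eq_of_t_eq (h₂ hx) (h₁ hy) hxy.symm]

theorem IsFlag.eq_of_t_image_eq {D : Set X} (hD : Γ.IsFlag D) (h₁ : F₁ ⊆ D) (h₂ : F₂ ⊆ D)
    (ht : Γ.t '' F₁ = Γ.t '' F₂) : F₁ = F₂ :=
  (hD.subset_of_t_image_subset h₂ h₁ ht.subset).antisymm
    (hD.subset_of_t_image_subset h₁ h₂ ht.symm.subset)

end IncidenceSystem

open IncidenceSystem

section CosetAction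

variable {G ι : Type*} [Group G] {Gs : ι → Subgroup G}

theorem singleton_mul_eq_smul (a : G) (s : Set G) : ({a} : Set G) * s = a • s :=
  Set.singleton_mul

-- With this action, `g • F` is definitionally the `actElt Gs g '' F` of `flagTransitiveOn`.
instance : MulAction G (CosetElt Gs) where
  smul := actElt Gs
  one_smul x := Subtype.ext <| Prod.ext rfl <| by
    change ({1} : Set G) * x.1.2 = x.1.2
    rw [Set.singleton_one, one_mul]
  mul_smul g h x := Subtype.ext <| Prod.ext rfl <| by
    change ({g * h} : Set G) * x.1.2 = {g} * ({h} * x.1.2)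
    rw [← mul_assoc, Set.singleton_mul_singleton]

theorem t_image_smul (g : G) (F : Set (CosetElt Gs)) :
    (cosetSystem Gs).t '' (g • F) = (cosetSystem Gs).t '' F := by
  rw [← Set.image_smul, Set.image_image]
  rfl

theorem inc_smul_smul_iff (g : G) (x y : CosetElt Gs) :
    (cosetSystem Gs).inc (g • x) (g • y) ↔ (cosetSystem Gs).inc x y := by
  change ((({g} : Set G) * x.1.2) ∩ ({g} * y.1.2)).Nonempty ↔ (x.1.2 ∩ y.1.2).Nonempty
  rw [singleton_mul_eq_smul, singleton_mul_eq_smul, ← Set.smul_set_inter, Set.smul_set_nonempty]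

theorem inc_smul_iff (g : G) (x y : CosetElt Gs) :
    (cosetSystem Gs).inc (g • x) y ↔ (cosetSystem Gs).inc x (g⁻¹ • y) := by
  rw [← inc_smul_smul_iff g x, smul_inv_smul]

theorem IncidenceSystem.IsFlag.smul {F : Set (CosetElt Gs)} (hF : (cosetSystem Gs).IsFlag F)
    (g : G) : (cosetSystem Gs).IsFlag (g • F) := by
  rintro _ ⟨x, hx, rfl⟩ _ ⟨y, hy, rfl⟩
  exact (inc_smul_smul_iff g x y).mpr (hF x hx y hy)

theorem exists_smul_idElt_eq (x : CosetElt Gs) {j : ι} (h : (cosetSystem Gs).t x = j) :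
    ∃ a : G, a • idElt Gs j = x := by
  obtain ⟨a, ha⟩ := x.2
  subst h
  exact ⟨a, Subtype.ext <| Prod.ext rfl ha.symm⟩

theorem smul_idElt_eq_smul_idElt_iff {j : ι} {a b : G} :
    a • idElt Gs j = b • idElt Gs j ↔ a⁻¹ * b ∈ Gs j := by
  rw [← leftCoset_eq_iff, ← singleton_mul_eq_smul, ← singleton_mul_eq_smul]
  exact ⟨fun h => congrArg (fun x : CosetElt Gs => x.1.2) h,
    fun h => Subtype.ext <| Prod.ext rfl h⟩

theorem smul_idElt_eq_idElt_iff {j : ι} {a : G} : a • idElt Gs j = idElt Gs j ↔ a ∈ Gs j := by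
  rw [← inv_mem_iff, ← mul_one a⁻¹, ← smul_idElt_eq_smul_idElt_iff, one_smul]

theorem inc_idElt_smul_idElt_iff {j k : ι} {b : G} :
    (cosetSystem Gs).inc (idElt Gs j) (b • idElt Gs k) ↔ b ∈ (Gs j : Set G) * (Gs k : Set G) := by
  change ((Gs j : Set G) ∩ ({b} * Gs k)).Nonempty ↔ _
  rw [singleton_mul_eq_smul]
  constructor
  · rintro ⟨z, hzj, hzk⟩
    rw [Set.mem_smul_set_iff_inv_smul_mem, smul_eq_mul] at hzk
    exact ⟨z, hzj, (b⁻¹ * z)⁻¹, (Gs k).inv_mem hzk, by group⟩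
  · rintro ⟨p, hp, q, hq, rfl⟩
    refine ⟨p, hp, Set.mem_smul_set_iff_inv_smul_mem.mpr ?_⟩
    simpa [mul_assoc] using (Gs k).inv_mem hq

end CosetAction

section BaseFlag

variable {G ι : Type*} [Group G] {Gs : ι → Subgroup G}

theorem mem_interSub_iff {J : Set ι} {x : G} : x ∈ interSub Gs J ↔ ∀ j ∈ J, x ∈ Gs j := by
  simp only [interSub, Subgroup.mem_iInf]

theorem baseFlag_eq_image (J : Set ι) : baseFlag Gs J = idElt Gs '' J := by
  ext x
  simp only [baseFlag, Set.mem_ofPred_eq, Set.mem_image, eq_comm]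

theorem isFlag_baseFlag (J : Set ι) : (cosetSystem Gs).IsFlag (baseFlag Gs J) := by
  rw [baseFlag_eq_image]
  rintro _ ⟨j, -, rfl⟩ _ ⟨k, -, rfl⟩
  exact ⟨1, (Gs j).one_mem, (Gs k).one_mem⟩

theorem t_image_baseFlag (J : Set ι) : (cosetSystem Gs).t '' baseFlag Gs J = J := by
  rw [baseFlag_eq_image, Set.image_image]
  exact Set.image_id' J

theorem baseFlag_insert (i : ι) (J : Set ι) :
    baseFlag Gs (insert i J) = insert (idElt Gs i) (baseFlag Gs J) := by
  rw [baseFlag_eq_image, baseFlag_eq_image, Set.image_insert_eq]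

theorem smul_baseFlag {J : Set ι} {c : G} (hc : c ∈ interSub Gs J) :
    c • baseFlag Gs J = baseFlag Gs J := by
  rw [baseFlag_eq_image, ← Set.image_smul, Set.image_image]
  exact Set.image_congr fun j hj => smul_idElt_eq_idElt_iff.mpr (interSub_le hj hc)

end BaseFlag

section FlagTransitive

variable {G ι : Type*} [Group G] {Gs : ι → Subgroup G}

theorem flagTransitiveOn_iff_exists_smul_eq_baseFlag {K : Set ι} :
    flagTransitiveOn Gs K ↔ ∀ F : Set (CosetElt Gs), (cosetSystem Gs).IsFlag F →
      (cosetSystem Gs).t '' F = K → ∃ g : G, g • F = baseFlag Gs K := by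
  constructor
  · intro h F hF hFt
    exact h F _ hF (isFlag_baseFlag K) hFt (t_image_baseFlag K)
  · intro h F F' hF hF' hFt hF't
    obtain ⟨g, hg⟩ := h F hF hFt
    obtain ⟨g', hg'⟩ := h F' hF' hF't
    refine ⟨g'⁻¹ * g, ?_⟩
    change (g'⁻¹ * g) • F = F'
    rw [mul_smul, hg, ← hg', inv_smul_smul]

theorem flagTransitiveOn.mono (hgeo : (cosetSystem Gs).IsGeometry) {K L : Set ι} (hKL : K ⊆ L)
    (hL : flagTransitiveOn Gs L) : flagTransitiveOn Gs K := by
  intro F F' hF hF' hFt hF't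
  obtain ⟨C, ⟨hC, hCt⟩, hFC⟩ := hgeo F hF
  obtain ⟨C', ⟨hC', hC't⟩, hF'C'⟩ := hgeo F' hF'
  have ht_restrict : ∀ {D : Set (CosetElt Gs)}, (cosetSystem Gs).t '' D = Set.univ →
      (cosetSystem Gs).t '' (D ∩ (cosetSystem Gs).t ⁻¹' L) = L := by
    intro D hD
    rw [Set.image_inter_preimage, hD, Set.univ_inter]
  obtain ⟨g, hg⟩ := hL _ _ (hC.mono Set.inter_subset_left) (hC'.mono Set.inter_subset_left)
    (ht_restrict hCt) (ht_restrict hC't)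
  replace hg : g • (C ∩ (cosetSystem Gs).t ⁻¹' L) = C' ∩ (cosetSystem Gs).t ⁻¹' L := hg
  have hF_part : F ⊆ C ∩ (cosetSystem Gs).t ⁻¹' L :=
    fun x hx => ⟨hFC hx, hKL (hFt ▸ Set.mem_image_of_mem _ hx)⟩
  have hgF : g • F ⊆ C' :=
    (Set.smul_set_mono hF_part).trans (hg.subset.trans Set.inter_subset_left)
  refine ⟨g, (hC'.eq_of_t_image_eq hgF hF'C' ?_ : g • F = F')⟩
  rw [t_image_smul, hFt, hF't]

theorem mul_interSub_subset_iInter_mul (i : ι) (J : Set ι) :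
    (Gs i : Set G) * (interSub Gs J : Set G) ⊆ ⋂ j ∈ J, (Gs i : Set G) * (Gs j : Set G) :=
  Set.subset_iInter₂ fun _ hj => Set.mul_subset_mul_left (interSub_le hj)

theorem iInter_mul_subset_of_flagTransitiveOn {i : ι} {J : Set ι}
    (h : flagTransitiveOn Gs (insert i J)) :
    ⋂ j ∈ J, (Gs i : Set G) * (Gs j : Set G) ⊆ (Gs i : Set G) * (interSub Gs J : Set G) := by
  intro x hx
  rw [Set.mem_iInter₂] at hx
  set F := insert (idElt Gs i) (x • baseFlag Gs J)
  have hF : (cosetSystem Gs).IsFlag F := by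
    refine ((isFlag_baseFlag J).smul x).insert ?_
    rintro _ ⟨_, ⟨j, hj, rfl⟩, rfl⟩
    exact inc_idElt_smul_idElt_iff.mpr (hx j hj)
  have hFt : (cosetSystem Gs).t '' F = insert i J := by
    rw [Set.image_insert_eq, t_image_smul, t_image_baseFlag]
    rfl
  obtain ⟨g, hg⟩ := h _ F (isFlag_baseFlag _) hF (t_image_baseFlag _) hFt
  replace hg : g • baseFlag Gs (insert i J) = F := hg
  have hg_mem : ∀ k ∈ insert i J, g • idElt Gs k ∈ F := by
    intro k hk
    rw [← hg, baseFlag_eq_image]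
    exact Set.smul_mem_smul_set ⟨k, hk, rfl⟩
  have hgi : g ∈ Gs i :=
    smul_idElt_eq_idElt_iff.mp <| hF.eq_of_t_eq (hg_mem i (Set.mem_insert i J))
      (Set.mem_insert _ _) rfl
  have hgJ : g⁻¹ * x ∈ interSub Gs J := by
    refine mem_interSub_iff.mpr fun j hj => smul_idElt_eq_smul_idElt_iff.mp ?_
    refine hF.eq_of_t_eq (hg_mem j (Set.mem_insert_of_mem i hj)) ?_ rfl
    exact Set.mem_insert_of_mem _ (Set.smul_mem_smul_set ⟨j, hj, rfl⟩)
  exact ⟨g, hgi, g⁻¹ * x, hgJ, mul_inv_cancel_left g x⟩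

theorem exists_smul_eq_baseFlag_insert {i : ι} {J : Set ι}
    (hint : ⋂ j ∈ J, (Gs i : Set G) * (Gs j : Set G) ⊆ (Gs i : Set G) * (interSub Gs J : Set G))
    {F : Set (CosetElt Gs)} (hF : (cosetSystem Gs).IsFlag F)
    (hFt : (cosetSystem Gs).t '' F = insert i J) (hBF : baseFlag Gs J ⊆ F) :
    ∃ c : G, c • F = baseFlag Gs (insert i J) := by
  obtain ⟨x, hxF, hxt⟩ : i ∈ (cosetSystem Gs).t '' F := hFt ▸ Set.mem_insert i J
  obtain ⟨a, rfl⟩ := exists_smul_idElt_eq x hxt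
  have ha : a⁻¹ ∈ ⋂ j ∈ J, (Gs i : Set G) * (Gs j : Set G) := by
    refine Set.mem_iInter₂.mpr fun j hj => inc_idElt_smul_idElt_iff.mp ?_
    rw [← inc_smul_iff]
    exact hF _ hxF _ (hBF (by rw [baseFlag_eq_image]; exact ⟨j, hj, rfl⟩))
  obtain ⟨b, hb, c, hc, hbc⟩ := hint ha
  have hca : c * a = b⁻¹ := by
    calc c * a = c * (b * c)⁻¹ := by rw [show b * c = a⁻¹ from hbc, inv_inv]
      _ = b⁻¹ := by group
  have hi : idElt Gs i ∈ c • F := by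
    rw [← smul_idElt_eq_idElt_iff.mpr ((Gs i).inv_mem hb), ← hca, mul_smul]
    exact Set.smul_mem_smul_set hxF
  have hsub : baseFlag Gs (insert i J) ⊆ c • F := by
    rw [baseFlag_insert, ← smul_baseFlag hc]
    exact Set.insert_subset hi (Set.smul_set_mono hBF)
  refine ⟨c, ((hF.smul c).eq_of_t_image_eq hsub subset_rfl ?_).symm⟩
  rw [t_image_smul, t_image_baseFlag, hFt]

theorem flagTransitiveOn_insert_of_iInter_mul_subset {i : ι} {J : Set ι}
    (hJ : flagTransitiveOn Gs J)
    (hint : ⋂ j ∈ J, (Gs i : Set G) * (Gs j : Set G) ⊆ (Gs i : Set G) * (interSub Gs J : Set G)) :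
    flagTransitiveOn Gs (insert i J) := by
  rw [flagTransitiveOn_iff_exists_smul_eq_baseFlag] at hJ ⊢
  intro F hF hFt
  have hFJt : (cosetSystem Gs).t '' (F ∩ (cosetSystem Gs).t ⁻¹' J) = J := by
    rw [Set.image_inter_preimage, hFt, Set.inter_eq_right.mpr (Set.subset_insert i J)]
  obtain ⟨g, hg⟩ := hJ _ (hF.mono Set.inter_subset_left) hFJt
  have hBF : baseFlag Gs J ⊆ g • F := hg ▸ Set.smul_set_mono Set.inter_subset_left
  obtain ⟨c, hc⟩ := exists_smul_eq_baseFlag_insert hint (hF.smul g) (by rwa [t_image_smul]) hBF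
  exact ⟨c * g, by rwa [mul_smul]⟩

end FlagTransitive

theorem flagTransitive_insert_iff_general
    {G ι : Type*} [Group G] (Gs : ι → Subgroup G)
    (hgeo : (cosetSystem Gs).IsGeometry)
    (i : ι) (J : Set ι) :
    flagTransitiveOn Gs (insert i J) ↔
      (flagTransitiveOn Gs J ∧
        (⋂ j ∈ J, (Gs i : Set G) * (Gs j : Set G))
          = (Gs i : Set G) * (interSub Gs J : Set G)) := by
  constructor
  · intro h
    exact ⟨h.mono hgeo (Set.subset_insert i J),
      (iInter_mul_subset_of_flagTransitiveOn h).antisymm (mul_interSub_subset_iInter_mul i J)⟩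
  · rintro ⟨hJ, hint⟩
    exact flagTransitiveOn_insert_of_iInter_mul_subset hJ hint.subset

/-- In a coset geometry `Γ(G, (Gᵢ))`, `G` is transitive on the flags
of type `{i} ∪ J` iff it is transitive on the flags of type `J` and
`⋂_{j ∈ J} Gᵢ Gⱼ = Gᵢ G_J`. -/
theorem flagTransitive_insert_iff
    {G ι : Type*} [Group G] (Gs : ι → Subgroup G)
    (hgeo : (cosetSystem Gs).IsGeometry)
    (i : ι) (J : Set ι) (hiJ : i ∉ J) :
    flagTransitiveOn Gs (insert i J) ↔
      (flagTransitiveOn Gs J ∧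
        (⋂ j ∈ J, (Gs i : Set G) * (Gs j : Set G))
          = (Gs i : Set G) * (interSub Gs J : Set G)) :=
  flagTransitive_insert_iff_general Gs hgeo i J

end ChiralGeom
end

section
/- Let (G⁺, R) be a C⁺-group of rank 3, so R = {α_1, α_2}, G_0⁺ = ⟨α_1⁻¹α_2⟩, G_1⁺ = ⟨α_2⟩, G_2⁺ = ⟨α_1⟩, and suppose Γ = Γ(G⁺; (G_0⁺, G_1⁺, G_2⁺)) is a geometry. Write α_{12} := α_1⁻¹α_2. Then every element of the residue Γ_{{G_0⁺}} is of the form (α_{12})^k G_1⁺ or (α_{12})^k G_2⁺ for some integer k; for every integer k, (α_{12})^k G_1⁺ is incident both to (α_{12})^k G_2⁺ and to (α_{12})^{k−1} G_2⁺; consequently the incidence graph of Γ_{{G_0⁺}} contains a cycle of length 2·|G_0⁺| visiting all its elements, and in particular Γ_{{G_0⁺}} is connected. -/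
open scoped Pointwise

namespace ChiralGeom

/-!
Since `G₀⁺ = ⟨α₁₂⟩`, every element of the residue of `G₀⁺` is a coset `α₁₂ᵏG₁⁺` or `α₁₂ᵏG₂⁺`,
and `α₁₂ = α₁⁻¹α₂ ∈ G₂⁺G₁⁺` makes consecutive terms of the zigzag
`G₁⁺, G₂⁺, α₁₂G₁⁺, α₁₂G₂⁺, …` incident. By the intersection condition, `⟨α₁₂⟩` meets
`G₁⁺ = ⟨α₂⟩` and `G₂⁺ = ⟨α₁⟩` trivially, so the zigzag first returns to its start after
`2 · ord(α₁₂) = 2|G₀⁺|` steps.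
-/

-- `N = 0` is allowed: then `ZMod N = ℤ` and the closed walk is a bi-infinite path.
lemma exists_bijective_zmod_of_int_chain {X : Type*} {R : X → X → Prop} {F : ℤ → X} {N : ℕ}
    (hF : ∀ k l, F k = F l ↔ (N : ℤ) ∣ l - k)
    (hsurj : Function.Surjective F) (hR : ∀ k, R (F k) (F (k + 1))) :
    ∃ f : ZMod N → X, Function.Bijective f ∧ ∀ m, R (f m) (f (m + 1)) := by
  have hcast (k : ℤ) : F ((k : ZMod N).cast : ℤ) = F k :=
    (hF _ _).mpr <| (ZMod.intCast_eq_intCast_iff_dvd_sub _ _ _).mp (ZMod.intCast_zmod_cast _)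
  refine ⟨fun m => F m.cast, ⟨fun m m' h => ?_, fun x => ?_⟩, fun m => ?_⟩
  · rw [← ZMod.intCast_zmod_cast m, ← ZMod.intCast_zmod_cast m',
      ZMod.intCast_eq_intCast_iff_dvd_sub]
    exact (hF _ _).mp h
  · obtain ⟨k, rfl⟩ := hsurj x
    exact ⟨k, hcast k⟩
  · have : m + 1 = ((m.cast + 1 : ℤ) : ZMod N) := by push_cast [ZMod.intCast_zmod_cast]; rfl
    simp only [this, hcast]
    exact hR _

lemma IncidenceSystem.connected_of_surjective_int_chain {X I : Type*} (Γ : IncidenceSystem X I)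
    {F : ℤ → X} (hsurj : Function.Surjective F) (hF : ∀ k, Γ.inc (F k) (F (k + 1))) :
    Γ.Connected := by
  suffices h : ∀ k d, Relation.ReflTransGen Γ.inc (F k) (F (k + d)) by
    intro x y
    obtain ⟨k, rfl⟩ := hsurj x
    obtain ⟨l, rfl⟩ := hsurj y
    simpa using h k (l - k)
  intro k d
  induction d using Int.induction_on with
  | zero => simpa using Relation.ReflTransGen.refl
  | succ i ih => exact ih.tail (by simpa only [add_assoc] using hF (k + i))
  | pred i ih =>
    refine ih.tail (Γ.inc_symm _ _ ?_)
    simpa only [add_sub_assoc', sub_add_cancel] using hF (k + (-i - 1))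

section Coset

variable {G : Type*} [Group G] {ι : Type*} (Gs : ι → Subgroup G)

lemma mkElt_eq_mkElt_iff {i : ι} {g h : G} : mkElt Gs i g = mkElt Gs i h ↔ g⁻¹ * h ∈ Gs i := by
  rw [mkElt, mkElt, Subtype.mk.injEq, Prod.mk.injEq, and_iff_right rfl]
  constructor
  · intro e
    obtain ⟨_, rfl, x, hx, hgx⟩ := e ▸ mem_singleton_mul_self (H := Gs i) h
    simpa [← hgx] using hx
  · intro hm
    exact singleton_mul_subgroup_eq ⟨h, ⟨g, rfl, g⁻¹ * h, hm, by group⟩, mem_singleton_mul_self h⟩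

lemma mkElt_ne_mkElt {i j : ι} (hij : i ≠ j) (g h : G) : mkElt Gs i g ≠ mkElt Gs j h :=
  fun e => hij (congrArg (fun x : CosetElt Gs => x.1.1) e)

lemma inc_mkElt_mkElt {i j : ι} {g h x y : G} (hx : x ∈ Gs i) (hy : y ∈ Gs j)
    (e : g * x = h * y) : (cosetSystem Gs).inc (mkElt Gs i g) (mkElt Gs j h) :=
  ⟨g * x, Set.mul_mem_mul rfl hx, e ▸ Set.mul_mem_mul rfl hy⟩

lemma eq_mkElt_of_mem (x : CosetElt Gs) {g : G} (hg : g ∈ x.1.2) : x = mkElt Gs x.1.1 g := by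
  obtain ⟨⟨i, S⟩, b, hb⟩ := x
  obtain rfl : S = {b} * (Gs i : Set G) := hb
  exact Subtype.ext (Prod.ext rfl (singleton_mul_subgroup_eq ⟨g, hg, mem_singleton_mul_self g⟩))

lemma exists_eq_mkElt_of_residueElt {i : ι} (x : (cosetSystem Gs).ResidueElt (baseFlag Gs {i})) :
    x.1.1.1 ≠ i ∧ ∃ g ∈ Gs i, x.1 = mkElt Gs x.1.1.1 g := by
  have hi : idElt Gs i ∈ baseFlag Gs {i} := ⟨i, rfl, rfl⟩
  obtain ⟨g, hgx, hgi⟩ := x.2.2 _ hi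
  refine ⟨fun h => x.2.1 ⟨i, rfl, ?_⟩, g, hgi, eq_mkElt_of_mem Gs x.1 hgx⟩
  exact (cosetSystem Gs).eq_of_inc_of_t_eq _ _ ⟨g, hgx, hgi⟩ h

lemma mkElt_isResidueElt {i j : ι} (hij : j ≠ i) {g : G} (hg : g ∈ Gs i) :
    mkElt Gs j g ∉ baseFlag Gs {i} ∧
      ∀ y ∈ baseFlag Gs {i}, (cosetSystem Gs).inc (mkElt Gs j g) y := by
  refine ⟨?_, ?_⟩
  · rintro ⟨_, rfl, e⟩
    exact hij (congrArg (fun x : CosetElt Gs => x.1.1) e)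
  · rintro _ ⟨_, rfl, rfl⟩
    exact ⟨g, mem_singleton_mul_self g, hg⟩

end Coset

section Zigzag

variable {G : Type*} [Group G] {ι : Type*} (Gs : ι → Subgroup G) (i j : ι) (a : G)

lemma zpow_inv_mul_zpow_mem_iff {H : Subgroup G} (hH : Subgroup.zpowers a ⊓ H = ⊥) (p q : ℤ) :
    (a ^ p)⁻¹ * a ^ q ∈ H ↔ (orderOf a : ℤ) ∣ q - p := by
  have hpq : (a ^ p)⁻¹ * a ^ q = a ^ (q - p) := by group
  rw [hpq, orderOf_dvd_iff_zpow_eq_one, ← Subgroup.mem_bot, ← hH, Subgroup.mem_inf,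
    and_iff_right (zpow_mem (Subgroup.mem_zpowers a) _)]

/-- The walk `a⁰Gᵢ, a⁰Gⱼ, a¹Gᵢ, a¹Gⱼ, …` through the coset incidence system. -/
def cosetZigzag (k : ℤ) : CosetElt Gs := mkElt Gs (if Even k then i else j) (a ^ (k / 2))

lemma cosetZigzag_two_mul (u : ℤ) : cosetZigzag Gs i j a (2 * u) = mkElt Gs i (a ^ u) := by
  simp [cosetZigzag]

lemma cosetZigzag_two_mul_add_one (u : ℤ) :
    cosetZigzag Gs i j a (2 * u + 1) = mkElt Gs j (a ^ u) := by
  have hu : (2 * u + 1) / 2 = u := by omega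
  rw [cosetZigzag, hu, if_neg (Int.not_even_two_mul_add_one u)]

variable {Gs i j a}

lemma cosetZigzag_eq_cosetZigzag_iff (hij : i ≠ j) (hi : Subgroup.zpowers a ⊓ Gs i = ⊥)
    (hj : Subgroup.zpowers a ⊓ Gs j = ⊥) (k l : ℤ) :
    cosetZigzag Gs i j a k = cosetZigzag Gs i j a l ↔ (2 * orderOf a : ℤ) ∣ l - k := by
  obtain ⟨u, rfl | rfl⟩ := Int.even_or_odd' k <;> obtain ⟨v, rfl | rfl⟩ := Int.even_or_odd' l
  · rw [cosetZigzag_two_mul, cosetZigzag_two_mul, mkElt_eq_mkElt_iff,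
      zpow_inv_mul_zpow_mem_iff a hi, ← mul_sub, mul_dvd_mul_iff_left two_ne_zero]
  · rw [cosetZigzag_two_mul, cosetZigzag_two_mul_add_one,
      iff_false_intro (mkElt_ne_mkElt Gs hij _ _), false_iff]
    exact fun h => by have := (dvd_mul_right 2 _).trans h; omega
  · rw [cosetZigzag_two_mul_add_one, cosetZigzag_two_mul,
      iff_false_intro (mkElt_ne_mkElt Gs hij.symm _ _), false_iff]
    exact fun h => by have := (dvd_mul_right 2 _).trans h; omega
  · rw [cosetZigzag_two_mul_add_one, cosetZigzag_two_mul_add_one, mkElt_eq_mkElt_iff,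
      zpow_inv_mul_zpow_mem_iff a hj, add_sub_add_right_eq_sub, ← mul_sub,
      mul_dvd_mul_iff_left two_ne_zero]

lemma inc_cosetZigzag_add_one (ha : a ∈ (Gs j : Set G) * Gs i) (k : ℤ) :
    (cosetSystem Gs).inc (cosetZigzag Gs i j a k) (cosetZigzag Gs i j a (k + 1)) := by
  obtain ⟨x, hx, y, hy, rfl⟩ := ha
  obtain ⟨u, rfl | rfl⟩ := Int.even_or_odd' k
  · rw [cosetZigzag_two_mul, cosetZigzag_two_mul_add_one]
    exact inc_mkElt_mkElt Gs (one_mem _) (one_mem _) rfl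
  · rw [show 2 * u + 1 + 1 = 2 * (u + 1) by ring, cosetZigzag_two_mul_add_one,
      cosetZigzag_two_mul]
    exact inc_mkElt_mkElt Gs hx (inv_mem hy) (by rw [zpow_add_one]; group)

end Zigzag

section CPlusRankThree

variable {G : Type*} [Group G] (α : ℕ → G)

lemma GJc_pair (i j : ℕ) : GJc α {i, j} = Subgroup.zpowers ((α i)⁻¹ * α j) := by
  rw [Subgroup.zpowers_eq_closure]
  apply le_antisymm
  · rw [GJc, Subgroup.closure_le]
    have hm : (α i)⁻¹ * α j ∈ Subgroup.closure {(α i)⁻¹ * α j} := Subgroup.subset_closure rfl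
    rintro g ⟨i', hi', j', hj', rfl⟩
    rcases hi' with rfl | rfl <;> rcases hj' with rfl | rfl
    · simp
    · exact hm
    · simpa using inv_mem hm
    · simp
  · rw [Subgroup.closure_le, Set.singleton_subset_iff]
    exact Subgroup.subset_closure ⟨i, Or.inl rfl, j, Or.inr rfl, rfl⟩

lemma GJc_singleton (i : ℕ) : GJc α {i} = ⊥ := by
  rw [GJc, eq_bot_iff, Subgroup.closure_le]
  rintro _ ⟨_, rfl, _, rfl, rfl⟩
  simp

lemma IsCPlusGroup.zpowers_inf_zpowers_eq_bot {r : ℕ} {α : ℕ → G} (hC : IsCPlusGroup r α)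
    {i j k : ℕ} (hi : i < r) (hj : j < r) (hk : k < r) (hij : i ≠ j) (hik : i ≠ k)
    (hjk : j ≠ k) :
    Subgroup.zpowers ((α i)⁻¹ * α k) ⊓ Subgroup.zpowers ((α j)⁻¹ * α k) = ⊥ := by
  have hinter : ({i, k} ∩ {j, k} : Set ℕ) = {k} := by
    ext x
    simp only [Set.mem_inter_iff, Set.mem_insert_iff, Set.mem_singleton_iff]
    omega
  rw [← GJc_pair, ← GJc_pair, hC.2.2 _ _ (by simp [Set.insert_subset_iff, hi, hk])
    (by simp [Set.insert_subset_iff, hj, hk]) (Set.nontrivial_pair hik)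
    (Set.nontrivial_pair hjk), hinter, GJc_singleton]

lemma maxParab_three_zero : maxParab 3 α 0 = Subgroup.zpowers ((α 1)⁻¹ * α 2) := by
  rw [maxParab, if_pos rfl, Subgroup.zpowers_eq_closure]
  congr 1
  ext g
  refine ⟨?_, ?_⟩
  · rintro ⟨j, h2, h3, rfl⟩
    obtain rfl : j = 2 := by omega
    rfl
  · rintro rfl
    exact ⟨2, le_rfl, by norm_num, rfl⟩

lemma maxParab_three_one : maxParab 3 α 1 = Subgroup.zpowers (α 2) := by
  rw [maxParab, if_neg one_ne_zero, Subgroup.zpowers_eq_closure]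
  congr 1
  ext g
  refine ⟨?_, ?_⟩
  · rintro ⟨j, h1, h3, hj, rfl⟩
    obtain rfl : j = 2 := by omega
    rfl
  · rintro rfl
    exact ⟨2, by norm_num, by norm_num, by norm_num, rfl⟩

lemma maxParab_three_two : maxParab 3 α 2 = Subgroup.zpowers (α 1) := by
  rw [maxParab, if_neg two_ne_zero, Subgroup.zpowers_eq_closure]
  congr 1
  ext g
  refine ⟨?_, ?_⟩
  · rintro ⟨j, h1, h3, hj, rfl⟩
    obtain rfl : j = 1 := by omega
    rfl
  · rintro rfl
    exact ⟨1, le_rfl, by norm_num, by norm_num, rfl⟩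

lemma IsCPlusGroup.zpowers_inf_cplusFamily_three_eq_bot {α : ℕ → G} (hC : IsCPlusGroup 3 α)
    {i : Fin 3} (hi : i ≠ 0) :
    Subgroup.zpowers ((α 1)⁻¹ * α 2) ⊓ cplusFamily 3 α i = ⊥ := by
  fin_cases i
  · exact absurd rfl hi
  · have h := hC.zpowers_inf_zpowers_eq_bot (i := 1) (j := 0) (k := 2)
      (by norm_num) (by norm_num) (by norm_num) (by norm_num) (by norm_num) (by norm_num)
    rwa [hC.1, inv_one, one_mul, ← maxParab_three_one] at h
  · have h := hC.zpowers_inf_zpowers_eq_bot (i := 2) (j := 0) (k := 1)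
      (by norm_num) (by norm_num) (by norm_num) (by norm_num) (by norm_num) (by norm_num)
    rwa [hC.1, inv_one, one_mul, ← maxParab_three_two, ← Subgroup.zpowers_inv, mul_inv_rev,
      inv_inv] at h

lemma mul_mem_cplusFamily_three_two_mul_one :
    (α 1)⁻¹ * α 2 ∈ (cplusFamily 3 α 2 : Set G) * cplusFamily 3 α 1 := by
  refine Set.mul_mem_mul (a := (α 1)⁻¹) ?_ ?_
  · change _ ∈ maxParab 3 α 2
    rw [maxParab_three_two]
    exact inv_mem (Subgroup.mem_zpowers _)
  · change _ ∈ maxParab 3 α 1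
    rw [maxParab_three_one]
    exact Subgroup.mem_zpowers _

end CPlusRankThree

section Residue

variable {G : Type*} [Group G] (α : ℕ → G)

lemma residueElt_eq_mkElt_zpow (x : (cosetSystem (cplusFamily 3 α)).ResidueElt
    (baseFlag (cplusFamily 3 α) ({0} : Set (Fin 3)))) :
    ∃ k : ℤ, x.1 = mkElt (cplusFamily 3 α) 1 (((α 1)⁻¹ * α 2) ^ k) ∨
      x.1 = mkElt (cplusFamily 3 α) 2 (((α 1)⁻¹ * α 2) ^ k) := by
  obtain ⟨hi, g, hg, hx⟩ := exists_eq_mkElt_of_residueElt _ x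
  change g ∈ maxParab 3 α 0 at hg
  rw [maxParab_three_zero] at hg
  obtain ⟨k, rfl⟩ := Subgroup.mem_zpowers_iff.mp hg
  refine ⟨k, ?_⟩
  generalize x.1.1.1 = i at hi hx
  fin_cases i
  · exact absurd rfl hi
  · exact Or.inl hx
  · exact Or.inr hx

def residueZigzag (k : ℤ) : (cosetSystem (cplusFamily 3 α)).ResidueElt
    (baseFlag (cplusFamily 3 α) ({0} : Set (Fin 3))) :=
  ⟨cosetZigzag (cplusFamily 3 α) 1 2 ((α 1)⁻¹ * α 2) k,
    mkElt_isResidueElt _ (by split <;> decide) <| by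
      change _ ∈ maxParab 3 α 0
      rw [maxParab_three_zero]
      exact zpow_mem (Subgroup.mem_zpowers _) _⟩

lemma residueZigzag_surjective : Function.Surjective (residueZigzag α) := by
  intro x
  obtain ⟨k, hx | hx⟩ := residueElt_eq_mkElt_zpow α x
  · exact ⟨2 * k, Subtype.ext ((cosetZigzag_two_mul _ _ _ _ k).trans hx.symm)⟩
  · exact ⟨2 * k + 1, Subtype.ext ((cosetZigzag_two_mul_add_one _ _ _ _ k).trans hx.symm)⟩

variable {α}

lemma IsCPlusGroup.residueZigzag_eq_iff (hC : IsCPlusGroup 3 α) (k l : ℤ) :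
    residueZigzag α k = residueZigzag α l ↔
      ((2 * Nat.card (maxParab 3 α 0) : ℕ) : ℤ) ∣ l - k := by
  rw [maxParab_three_zero, Nat.card_zpowers, Nat.cast_mul, Nat.cast_two]
  refine Iff.trans ⟨congrArg Subtype.val, Subtype.ext⟩ ?_
  exact cosetZigzag_eq_cosetZigzag_iff (by decide)
    (hC.zpowers_inf_cplusFamily_three_eq_bot (by decide))
    (hC.zpowers_inf_cplusFamily_three_eq_bot (by decide)) k l

lemma IsCPlusGroup.residueZigzag_ne_add_one (hC : IsCPlusGroup 3 α) (k : ℤ) :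
    residueZigzag α k ≠ residueZigzag α (k + 1) := by
  rw [ne_eq, hC.residueZigzag_eq_iff, add_sub_cancel_left]
  intro h
  have := Int.eq_one_of_dvd_one (by positivity) h
  omega

end Residue

theorem cplus_rank3_rank2_residue_structure_general
    {G : Type*} [Group G] (α : ℕ → G) (hC : IsCPlusGroup 3 α) :
    (∀ x : (cosetSystem (cplusFamily 3 α)).ResidueElt
        (baseFlag (cplusFamily 3 α) ({0} : Set (Fin 3))),
      ∃ k : ℤ, x.1 = mkElt (cplusFamily 3 α) 1 (((α 1)⁻¹ * α 2) ^ k) ∨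
        x.1 = mkElt (cplusFamily 3 α) 2 (((α 1)⁻¹ * α 2) ^ k)) ∧
    (∀ k : ℤ,
      (cosetSystem (cplusFamily 3 α)).inc
        (mkElt (cplusFamily 3 α) 1 (((α 1)⁻¹ * α 2) ^ k))
        (mkElt (cplusFamily 3 α) 2 (((α 1)⁻¹ * α 2) ^ k)) ∧
      (cosetSystem (cplusFamily 3 α)).inc
        (mkElt (cplusFamily 3 α) 1 (((α 1)⁻¹ * α 2) ^ k))
        (mkElt (cplusFamily 3 α) 2 (((α 1)⁻¹ * α 2) ^ (k - 1)))) ∧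
    (∃ f : ZMod (2 * Nat.card (maxParab 3 α 0)) →
        (cosetSystem (cplusFamily 3 α)).ResidueElt
          (baseFlag (cplusFamily 3 α) ({0} : Set (Fin 3))),
      Function.Bijective f ∧
      ∀ m, ((cosetSystem (cplusFamily 3 α)).residue
              (baseFlag (cplusFamily 3 α) ({0} : Set (Fin 3)))).inc (f m) (f (m + 1)) ∧
        f m ≠ f (m + 1)) ∧
    ((cosetSystem (cplusFamily 3 α)).residue
        (baseFlag (cplusFamily 3 α) ({0} : Set (Fin 3)))).Connected := by
  have hinc := inc_cosetZigzag_add_one (mul_mem_cplusFamily_three_two_mul_one α)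
  refine ⟨residueElt_eq_mkElt_zpow α,
    fun k => ⟨inc_mkElt_mkElt _ (one_mem _) (one_mem _) rfl, ?_⟩,
    exists_bijective_zmod_of_int_chain (R := fun x y => _ ∧ x ≠ y) hC.residueZigzag_eq_iff
      (residueZigzag_surjective α) fun k => ⟨hinc k, hC.residueZigzag_ne_add_one k⟩,
    IncidenceSystem.connected_of_surjective_int_chain _ (residueZigzag_surjective α) hinc⟩
  have h := hinc (2 * (k - 1) + 1)
  rw [show 2 * (k - 1) + 1 + 1 = 2 * k by ring, cosetZigzag_two_mul,
    cosetZigzag_two_mul_add_one] at h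
  exact (cosetSystem _).inc_symm _ _ h

/-- For a rank `3` C⁺-group, every element of the residue of `{G₀⁺}`
has the form `α₁₂ᵏ G₁⁺` or `α₁₂ᵏ G₂⁺`; `α₁₂ᵏ G₁⁺` is incident to `α₁₂ᵏ G₂⁺` and to
`α₁₂^{k-1} G₂⁺`; the incidence graph of the residue contains a cycle of length
`2|G₀⁺|` visiting all its elements; in particular the residue is connected. -/
theorem cplus_rank3_rank2_residue_structure
    {G : Type*} [Group G] (α : ℕ → G) (hC : IsCPlusGroup 3 α)
    (hgeo : (cosetSystem (cplusFamily 3 α)).IsGeometry) :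
    (∀ x : (cosetSystem (cplusFamily 3 α)).ResidueElt
        (baseFlag (cplusFamily 3 α) ({0} : Set (Fin 3))),
      ∃ k : ℤ, x.1 = mkElt (cplusFamily 3 α) 1 (((α 1)⁻¹ * α 2) ^ k) ∨
        x.1 = mkElt (cplusFamily 3 α) 2 (((α 1)⁻¹ * α 2) ^ k)) ∧
    (∀ k : ℤ,
      (cosetSystem (cplusFamily 3 α)).inc
        (mkElt (cplusFamily 3 α) 1 (((α 1)⁻¹ * α 2) ^ k))
        (mkElt (cplusFamily 3 α) 2 (((α 1)⁻¹ * α 2) ^ k)) ∧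
      (cosetSystem (cplusFamily 3 α)).inc
        (mkElt (cplusFamily 3 α) 1 (((α 1)⁻¹ * α 2) ^ k))
        (mkElt (cplusFamily 3 α) 2 (((α 1)⁻¹ * α 2) ^ (k - 1)))) ∧
    (∃ f : ZMod (2 * Nat.card (maxParab 3 α 0)) →
        (cosetSystem (cplusFamily 3 α)).ResidueElt
          (baseFlag (cplusFamily 3 α) ({0} : Set (Fin 3))),
      Function.Bijective f ∧
      ∀ m, ((cosetSystem (cplusFamily 3 α)).residue
              (baseFlag (cplusFamily 3 α) ({0} : Set (Fin 3)))).inc (f m) (f (m + 1)) ∧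
        f m ≠ f (m + 1)) ∧
    ((cosetSystem (cplusFamily 3 α)).residue
        (baseFlag (cplusFamily 3 α) ({0} : Set (Fin 3)))).Connected :=
  cplus_rank3_rank2_residue_structure_general α hC

end ChiralGeom
end

section
/- (Tits) Let n be a positive integer, I := {0, …, n−1}, G a group and (G_i)_{i∈I} a family of subgroups of G. Let X be the set of all cosets G_i g with g ∈ G and i ∈ I, define t : X → I by t(G_i g) = i, and define incidence by G_i g₁ * G_j g₂ iff G_i g₁ ∩ G_j g₂ ≠ ∅. Then Γ := (X, *, t, I) is an incidence system having a chamber; G acts by right multiplication on Γ as a group of type-preserving automorphisms; and G is transitive on the flags of Γ of rank less than 3. -/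
/-! A flag of rank at most two consists of cosets through one common element `c`, so it is the
set of all cosets of its types through `c`; right multiplication by `c⁻¹ c'` carries the cosets
through `c` onto those through `c'`. The cosets through `1` of all types form a chamber. -/

open scoped Pointwise

namespace ChiralGeom

section Tits

variable {G : Type*} [Group G] {ι : Type*}

/-- The elements of Tits' coset incidence system: pairs `(i, S)` where `S` is a
right coset `Gᵢ g`. -/
abbrev CosetEltR (Gs : ι → Subgroup G) : Type _ :=
  {p : ι × Set G // ∃ g : G, p.2 = (Gs p.1 : Set G) * ({g} : Set G)}

lemma subgroup_mul_singleton_eq {H : Subgroup G} {a b : G}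
    (h : (((H : Set G) * ({a} : Set G)) ∩ ((H : Set G) * ({b} : Set G))).Nonempty) :
    (H : Set G) * ({a} : Set G) = (H : Set G) * ({b} : Set G) := by
  obtain ⟨x, hx1, hx2⟩ := h
  obtain ⟨h1, hh1, a', ha', hxa⟩ := Set.mem_mul.mp hx1
  obtain ⟨h2, hh2, b', hb', hxb⟩ := Set.mem_mul.mp hx2
  clear hx1 hx2
  obtain rfl : a = a' := ha'.symm
  obtain rfl : b = b' := hb'.symm
  have key : h1 * a = h2 * b := hxa.trans hxb.symm
  have e1 : h1 * (a * b⁻¹) = h2 := by rw [← mul_assoc, key, mul_assoc, mul_inv_cancel, mul_one]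
  have e : a * b⁻¹ = h1⁻¹ * h2 := by rw [← e1]; group
  have hab : a * b⁻¹ ∈ H := e ▸ H.mul_mem (H.inv_mem hh1) hh2
  ext y
  simp only [Set.mem_mul, Set.mem_singleton_iff]
  constructor
  · rintro ⟨z, hz, w, hw, hy⟩
    refine ⟨z * (a * b⁻¹), H.mul_mem hz hab, b, rfl, ?_⟩
    rw [← hy, hw]; group
  · rintro ⟨z, hz, w, hw, hy⟩
    refine ⟨z * (b * a⁻¹), H.mul_mem hz (by simpa using H.inv_mem hab), a, rfl, ?_⟩
    rw [← hy, hw]; group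

/-- Tits' coset incidence system `Γ(G; (Gᵢ)_{i ∈ ι})` with right cosets `Gᵢ g`. -/
def cosetSystemR (Gs : ι → Subgroup G) : IncidenceSystem (CosetEltR Gs) ι where
  t p := p.1.1
  inc p q := (p.1.2 ∩ q.1.2).Nonempty
  inc_refl p := by
    obtain ⟨g, hg⟩ := p.2
    exact ⟨g, by
      rw [Set.inter_self, hg]
      exact ⟨1, (Gs p.1.1).one_mem, g, rfl, one_mul g⟩⟩
  inc_symm p q h := by
    obtain ⟨x, hx1, hx2⟩ := h
    exact ⟨x, hx2, hx1⟩
  eq_of_inc_of_t_eq p q h ht := by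
    obtain ⟨a, ha⟩ := p.2
    obtain ⟨b, hb⟩ := q.2
    have ht' : p.1.1 = q.1.1 := ht
    apply Subtype.ext
    apply Prod.ext ht'
    show p.1.2 = q.1.2
    have hb2 : q.1.2 = (Gs p.1.1 : Set G) * ({b} : Set G) := by rw [hb, ht']
    rw [ha, hb2]
    apply subgroup_mul_singleton_eq
    rw [← ha, ← hb2]
    exact h

/-- The action of `g ∈ G` on Tits' coset incidence system by right multiplication. -/
def actEltR (Gs : ι → Subgroup G) (g : G) (x : CosetEltR Gs) : CosetEltR Gs :=
  ⟨(x.1.1, x.1.2 * ({g} : Set G)), by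
    obtain ⟨a, ha⟩ := x.2
    exact ⟨a * g, by rw [ha, mul_assoc, Set.singleton_mul_singleton]⟩⟩

theorem _root_.Set.exists_forall_mem_of_encard_lt_three {α β : Type*} [Nonempty β]
    {S : Set α} {f : α → Set β} (hS : ∀ x ∈ S, ∀ y ∈ S, (f x ∩ f y).Nonempty)
    (hcard : S.encard < 3) : ∃ c, ∀ x ∈ S, c ∈ f x := by
  obtain ⟨k, hk⟩ := ENat.ne_top_iff_exists.mp (hcard.trans_le le_top).ne
  have hk3 : k < 3 := by exact_mod_cast hk ▸ hcard
  interval_cases k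
  · obtain rfl : S = ∅ := Set.encard_eq_zero.mp hk.symm
    simp
  · obtain ⟨x, rfl⟩ := Set.encard_eq_one.mp hk.symm
    obtain ⟨c, hc, -⟩ := hS x rfl x rfl
    exact ⟨c, by simpa using hc⟩
  · obtain ⟨x, y, -, rfl⟩ := Set.encard_eq_two.mp hk.symm
    obtain ⟨c, hcx, hcy⟩ := hS x (by simp) y (by simp)
    exact ⟨c, by simp [hcx, hcy]⟩

theorem IncidenceSystem.IsFlag.injOn_t {X I : Type*} {Γ : IncidenceSystem X I} {F : Set X}
    (hF : Γ.IsFlag F) : Set.InjOn Γ.t F :=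
  fun x hx y hy => Γ.eq_of_inc_of_t_eq x y (hF x hx y hy)

theorem _root_.Set.mul_singleton_inter_nonempty_iff {A B : Set G} (g : G) :
    ((A * {g}) ∩ (B * {g})).Nonempty ↔ (A ∩ B).Nonempty := by
  simp only [Set.mul_singleton, ← Set.image_inter (mul_left_injective g), Set.image_nonempty]

theorem _root_.Set.mul_mem_mul_singleton_iff {A : Set G} {c g : G} :
    c * g ∈ A * {g} ↔ c ∈ A := by
  rw [Set.mul_singleton, (mul_left_injective g).mem_set_image]

variable {Gs : ι → Subgroup G}

theorem actEltR_actEltR (g h : G) (x : CosetEltR Gs) :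
    actEltR Gs h (actEltR Gs g x) = actEltR Gs (g * h) x :=
  Subtype.ext (Prod.ext rfl (by simp only [actEltR, mul_assoc, Set.singleton_mul_singleton]))

theorem actEltR_one (x : CosetEltR Gs) : actEltR Gs 1 x = x :=
  Subtype.ext (Prod.ext rfl (by simp only [actEltR, Set.singleton_one, mul_one]))

variable (Gs) in
def actPermR (g : G) : Equiv.Perm (CosetEltR Gs) where
  toFun := actEltR Gs g
  invFun := actEltR Gs g⁻¹
  left_inv x := by rw [actEltR_actEltR, mul_inv_cancel, actEltR_one]
  right_inv x := by rw [actEltR_actEltR, inv_mul_cancel, actEltR_one]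

theorem isAut_actPermR (g : G) : (cosetSystemR Gs).IsAut (actPermR Gs g) :=
  ⟨fun x y => (Set.mul_singleton_inter_nonempty_iff (A := x.1.2) (B := y.1.2) g).symm,
    fun _ => rfl⟩

variable (Gs) in
def cosetsThrough (J : Set ι) (c : G) : Set (CosetEltR Gs) :=
  {x | x.1.1 ∈ J ∧ c ∈ x.1.2}

theorem isFlag_cosetsThrough (J : Set ι) (c : G) :
    (cosetSystemR Gs).IsFlag (cosetsThrough Gs J c) :=
  fun _ hx _ hy => ⟨c, hx.2, hy.2⟩

theorem image_t_cosetsThrough (J : Set ι) (c : G) :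
    (cosetSystemR Gs).t '' cosetsThrough Gs J c = J := by
  refine Set.Subset.antisymm (Set.image_subset_iff.mpr fun x hx => hx.1) fun i hi => ?_
  exact ⟨⟨(i, (Gs i : Set G) * {c}), c, rfl⟩,
    ⟨hi, 1, (Gs i).one_mem, c, rfl, one_mul c⟩, rfl⟩

theorem actEltR_image_cosetsThrough (g : G) (J : Set ι) (c : G) :
    actEltR Gs g '' cosetsThrough Gs J c = cosetsThrough Gs J (c * g) := by
  change actPermR Gs g '' _ = _
  rw [Equiv.image_eq_preimage_symm]
  ext x
  change x.1.1 ∈ J ∧ c ∈ x.1.2 * {g⁻¹} ↔ x.1.1 ∈ J ∧ c * g ∈ x.1.2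
  rw [← Set.mul_mem_mul_singleton_iff (g := g⁻¹) (A := x.1.2), mul_inv_cancel_right]

theorem eq_cosetsThrough_of_forall_mem {F : Set (CosetEltR Gs)} {c : G}
    (hc : ∀ x ∈ F, c ∈ x.1.2) : F = cosetsThrough Gs ((cosetSystemR Gs).t '' F) c := by
  refine Set.Subset.antisymm (fun x hx => ⟨⟨x, hx, rfl⟩, hc x hx⟩) ?_
  rintro x ⟨⟨y, hy, hyx⟩, hcx⟩
  rwa [← (cosetSystemR Gs).eq_of_inc_of_t_eq y x ⟨c, hc y hy, hcx⟩ hyx]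

-- This fails in rank 3: three pairwise meeting cosets need not share an element.
theorem exists_forall_mem_of_isFlag [Finite ι] {F : Set (CosetEltR Gs)}
    (hF : (cosetSystemR Gs).IsFlag F) (hrank : ((cosetSystemR Gs).t '' F).ncard < 3) :
    ∃ c : G, ∀ x ∈ F, c ∈ x.1.2 := by
  refine Set.exists_forall_mem_of_encard_lt_three hF ?_
  rwa [← hF.injOn_t.encard_image, ← (Set.toFinite _).cast_ncard_eq, Nat.cast_lt_ofNat]

theorem tits_coset_incidence_system_general
    {G : Type*} [Group G] (n : ℕ) (Gs : Fin n → Subgroup G) :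
    (∃ C : Set (CosetEltR Gs), (cosetSystemR Gs).IsChamber C) ∧
    (∀ g : G, ∃ e : Equiv.Perm (CosetEltR Gs),
      (∀ x, e x = actEltR Gs g x) ∧ (cosetSystemR Gs).IsAut e) ∧
    (∀ F F' : Set (CosetEltR Gs), (cosetSystemR Gs).IsFlag F → (cosetSystemR Gs).IsFlag F' →
      (cosetSystemR Gs).t '' F = (cosetSystemR Gs).t '' F' →
      ((cosetSystemR Gs).t '' F).ncard < 3 →
      ∃ g : G, (actEltR Gs g) '' F = F') := by
  refine ⟨⟨cosetsThrough Gs Set.univ 1, isFlag_cosetsThrough _ _, image_t_cosetsThrough _ _⟩,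
    fun g => ⟨actPermR Gs g, fun _ => rfl, isAut_actPermR g⟩, ?_⟩
  intro F F' hF hF' htype hrank
  obtain ⟨c, hc⟩ := exists_forall_mem_of_isFlag hF hrank
  obtain ⟨c', hc'⟩ := exists_forall_mem_of_isFlag hF' (htype ▸ hrank)
  refine ⟨c⁻¹ * c', ?_⟩
  rw [eq_cosetsThrough_of_forall_mem hc, eq_cosetsThrough_of_forall_mem hc',
    actEltR_image_cosetsThrough, mul_inv_cancel_left, htype]

/-- (Tits, 1956) For a group `G` with subgroups `(Gᵢ)_{i ∈ I}`,
`I = {0, …, n-1}`, `n > 0`: the coset incidence system (on the right cosets `Gᵢ g`,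
where `Gᵢ g₁` and `Gⱼ g₂` are incident iff they meet) has a chamber; `G` acts on it
by right multiplication as type-preserving automorphisms; and `G` is transitive on
the flags of rank less than `3`. -/
theorem tits_coset_incidence_system
    {G : Type*} [Group G] (n : ℕ) (hn : 0 < n) (Gs : Fin n → Subgroup G) :
    (∃ C : Set (CosetEltR Gs), (cosetSystemR Gs).IsChamber C) ∧
    (∀ g : G, ∃ e : Equiv.Perm (CosetEltR Gs),
      (∀ x, e x = actEltR Gs g x) ∧ (cosetSystemR Gs).IsAut e) ∧
    (∀ F F' : Set (CosetEltR Gs), (cosetSystemR Gs).IsFlag F → (cosetSystemR Gs).IsFlag F' →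
      (cosetSystemR Gs).t '' F = (cosetSystemR Gs).t '' F' →
      ((cosetSystemR Gs).t '' F).ncard < 3 →
      ∃ g : G, (actEltR Gs g) '' F = F') :=
  tits_coset_incidence_system_general n Gs

end Tits

end ChiralGeom
end
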